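/- Define c : [0,1] → ℝ by c(μ) := min{10μ, 10(1−μ)}, the operator T on functions f : [0,1] → ℝ by (T f)(μ) := min{ c(μ), 1 + ((1/3)μ + (2/3)(1−μ))·f(μ/(2−μ)) + ((2/3)μ + (1/3)(1−μ))·f(2μ/(1+μ)) }, and C₁ : [0,1] → ℝ by C₁(μ) = 10μ for 0 ≤ μ ≤ 13/30, C₁(μ) = 13/3 for 13/30 < μ ≤ 17/30, and C₁(μ) = 10(1−μ) for 17/30 < μ ≤ 1. Then T C₁ = C₁, and consequently the value iteration Cₙ defined by C₀ := c and Cₙ := T Cₙ₋₁ satisfies Cₙ = C₁ for all n ≥ 1. -/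

import Mathlib

/-- Terminal cost in the Bernoulli hypothesis-testing example: `c(μ) = min{10μ, 10(1−μ)}`. -/
noncomputable def cCost (μ : ℝ) : ℝ := min (10 * μ) (10 * (1 - μ))

/-- One-step value iteration operator of the Bernoulli hypothesis-testing example:
either stop (cost `c(μ)`) or pay `1` for one more observation and update the belief to
`μ/(2−μ)` (success) or `2μ/(1+μ)` (failure). -/
noncomputable def Topt (f : ℝ → ℝ) (μ : ℝ) : ℝ :=
  min (cCost μ)
    (1 + ((1 / 3) * μ + (2 / 3) * (1 - μ)) * f (μ / (2 - μ)) +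
      ((2 / 3) * μ + (1 / 3) * (1 - μ)) * f (2 * μ / (1 + μ)))

/-- The one-step value function `C₁` of the example. -/
noncomputable def C₁ (μ : ℝ) : ℝ :=
  if μ ≤ 13 / 30 then 10 * μ else if μ ≤ 17 / 30 then 13 / 3 else 10 * (1 - μ)

/-- The value iteration `C₀ = c`, `Cₙ = T Cₙ₋₁` of the example. -/
noncomputable def Cseq : ℕ → ℝ → ℝ
  | 0 => cCost
  | n + 1 => Topt (Cseq n)

/-!
The posterior is a martingale: the weights of `Topt` times the updated beliefs are `μ/3` and
`2μ/3`. So once the values of `g` at the two updates are replaced by affine pieces, the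
continuation cost is affine in `μ`, and `Topt cCost ≤ C₁ ≤ Topt C₁` on `[0,1]` reduces to linear
arithmetic. As `C₁ = min c (13/3) ≤ c` and `Topt` is monotone on `[0,1]`, every `g` with
`C₁ ≤ g ≤ c` there satisfies `Topt g = C₁`; this applies to `g = C₁` and, inductively, to
every `Cₙ`.
-/

open Set

lemma div_two_sub_self_mem_Icc {μ : ℝ} (hμ : μ ∈ Icc (0 : ℝ) 1) :
    μ / (2 - μ) ∈ Icc (0 : ℝ) 1 := by
  obtain ⟨h0, h1⟩ := hμ
  have hpos : 0 < 2 - μ := by linarith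
  exact ⟨div_nonneg h0 hpos.le, (div_le_one hpos).2 (by linarith)⟩

lemma two_mul_div_one_add_self_mem_Icc {μ : ℝ} (hμ : μ ∈ Icc (0 : ℝ) 1) :
    2 * μ / (1 + μ) ∈ Icc (0 : ℝ) 1 := by
  obtain ⟨h0, h1⟩ := hμ
  have hpos : 0 < 1 + μ := by linarith
  exact ⟨div_nonneg (by linarith) hpos.le, (div_le_one hpos).2 (by linarith)⟩

lemma success_weight_mul_update {μ : ℝ} (h : 2 - μ ≠ 0) :
    ((1 / 3) * μ + (2 / 3) * (1 - μ)) * (μ / (2 - μ)) = μ / 3 := by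
  field_simp
  ring

lemma failure_weight_mul_update {μ : ℝ} (h : 1 + μ ≠ 0) :
    ((2 / 3) * μ + (1 / 3) * (1 - μ)) * (2 * μ / (1 + μ)) = 2 * μ / 3 := by
  field_simp
  ring

lemma Topt_mono {f g : ℝ → ℝ} (hfg : ∀ x ∈ Icc (0 : ℝ) 1, f x ≤ g x) {μ : ℝ}
    (hμ : μ ∈ Icc (0 : ℝ) 1) : Topt f μ ≤ Topt g μ := by
  have hP : 0 ≤ (1 / 3) * μ + (2 / 3) * (1 - μ) := by linarith [hμ.2]
  have hQ : 0 ≤ (2 / 3) * μ + (1 / 3) * (1 - μ) := by linarith [hμ.1, hμ.2]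
  unfold Topt
  gcongr
  · exact hfg _ (div_two_sub_self_mem_Icc hμ)
  · exact hfg _ (two_mul_div_one_add_self_mem_Icc hμ)

lemma C₁_eq_min (μ : ℝ) : C₁ μ = min (cCost μ) (13 / 3) := by
  unfold C₁ cCost
  split_ifs with h₁ h₂ <;>
  · simp only [min_def]
    split_ifs <;> linarith

lemma C₁_le_cCost (μ : ℝ) : C₁ μ ≤ cCost μ :=
  (C₁_eq_min μ).trans_le (min_le_left _ _)

lemma C₁_eq_or_eq_or_eq (x : ℝ) : C₁ x = 10 * x ∨ C₁ x = 13 / 3 ∨ C₁ x = 10 * (1 - x) := by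
  unfold C₁
  split_ifs <;> simp

lemma Topt_cCost_le_C₁ {μ : ℝ} (hμ : μ ∈ Icc (0 : ℝ) 1) : Topt cCost μ ≤ C₁ μ := by
  obtain ⟨h0, h1⟩ := hμ
  have hs := success_weight_mul_update (μ := μ) (by linarith)
  have hf := failure_weight_mul_update (μ := μ) (by linarith)
  have hcs : cCost (μ / (2 - μ)) ≤ 10 * (μ / (2 - μ)) := min_le_left _ _
  have hcf : cCost (2 * μ / (1 + μ)) ≤ 10 * (1 - 2 * μ / (1 + μ)) := min_le_right _ _
  have hP : 0 ≤ (1 / 3) * μ + (2 / 3) * (1 - μ) := by linarith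
  have hQ : 0 ≤ (2 / 3) * μ + (1 / 3) * (1 - μ) := by linarith
  rw [C₁_eq_min]
  refine min_le_min_left _ ?_
  linarith [mul_le_mul_of_nonneg_left hcs hP, mul_le_mul_of_nonneg_left hcf hQ]

lemma C₁_le_Topt_C₁ {μ : ℝ} (hμ : μ ∈ Icc (0 : ℝ) 1) : C₁ μ ≤ Topt C₁ μ := by
  obtain ⟨h0, h1⟩ := hμ
  have hs := success_weight_mul_update (μ := μ) (by linarith)
  have hf := failure_weight_mul_update (μ := μ) (by linarith)
  have hle : C₁ μ ≤ 10 * μ ∧ C₁ μ ≤ 13 / 3 ∧ C₁ μ ≤ 10 * (1 - μ) := by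
    rw [C₁_eq_min, cCost]
    exact ⟨(min_le_left _ _).trans (min_le_left _ _), min_le_right _ _,
      (min_le_left _ _).trans (min_le_right _ _)⟩
  refine le_min (C₁_le_cCost μ) ?_
  -- each of the nine combinations of pieces dominates `C₁ μ` on all of `[0,1]`
  rcases C₁_eq_or_eq_or_eq (μ / (2 - μ)) with hCs | hCs | hCs <;>
  rcases C₁_eq_or_eq_or_eq (2 * μ / (1 + μ)) with hCf | hCf | hCf <;>
  · rw [hCs, hCf]
    linarith

theorem Topt_eq_C₁_of_C₁_le_of_le_cCost {g : ℝ → ℝ} (hC₁g : ∀ x ∈ Icc (0 : ℝ) 1, C₁ x ≤ g x)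
    (hgc : ∀ x ∈ Icc (0 : ℝ) 1, g x ≤ cCost x) {μ : ℝ} (hμ : μ ∈ Icc (0 : ℝ) 1) :
    Topt g μ = C₁ μ :=
  le_antisymm ((Topt_mono hgc hμ).trans (Topt_cCost_le_C₁ hμ))
    ((C₁_le_Topt_C₁ hμ).trans (Topt_mono hC₁g hμ))

theorem Cseq_succ_eq_C₁ (n : ℕ) {μ : ℝ} (hμ : μ ∈ Icc (0 : ℝ) 1) : Cseq (n + 1) μ = C₁ μ := by
  induction n generalizing μ with
  | zero =>
    exact Topt_eq_C₁_of_C₁_le_of_le_cCost (fun x _ ↦ C₁_le_cCost x) (fun _ _ ↦ le_rfl) hμ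
  | succ n ih =>
    exact Topt_eq_C₁_of_C₁_le_of_le_cCost (fun _ hx ↦ (ih hx).ge)
      (fun x hx ↦ (ih hx).trans_le (C₁_le_cCost x)) hμ

/-- `C₁` is a fixed point of the value iteration operator on `[0,1]`, and consequently the
value iteration is stationary from stage `1` on: `Cₙ = C₁` on `[0,1]` for all `n ≥ 1`. -/
theorem Topt_C₁_eq_C₁_and_stationary :
    (∀ μ ∈ Set.Icc (0 : ℝ) 1, Topt C₁ μ = C₁ μ) ∧
    (∀ n : ℕ, 1 ≤ n → ∀ μ ∈ Set.Icc (0 : ℝ) 1, Cseq n μ = C₁ μ) := by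
  refine ⟨fun μ hμ ↦ Topt_eq_C₁_of_C₁_le_of_le_cCost (fun _ _ ↦ le_rfl)
    (fun x _ ↦ C₁_le_cCost x) hμ, fun n hn μ hμ ↦ ?_⟩
  obtain ⟨m, rfl⟩ := Nat.exists_eq_add_of_le' hn
  exact Cseq_succ_eq_C₁ m hμ
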